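/- Let n ≥ 1 and let X = ℂⁿ equipped with the supremum norm, so that X* is isometrically ℓ₁ⁿ (ℂⁿ with the ℓ₁ norm). Then every point of S_{X*} is a strong peak point for A_{w*u}(B_{X*}) with respect to the norm; consequently, for every complex Banach space Y and every ε ∈ (0, 1) there exists η(ε) > 0 such that whenever f ∈ A_{w*u}(B_{X*}, Y) with ‖f‖∞ = 1 and x₀* ∈ S_{X*} satisfy ‖f(x₀*)‖_Y > 1 − η(ε), there exist g ∈ A_{w*u}(B_{X*}, Y) with ‖g‖∞ = 1 and x₁* ∈ S_{X*} such that ‖g(x₁*)‖_Y = 1, ‖g − f‖∞ < ε and ‖x₁* − x₀*‖ < ε. -/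

import Mathlib

/-!
Rotating coordinates, a point `x₀` of the unit sphere of `ℓ₁ⁿ` becomes `(α_j)` with `α_j ≥ 0` and
`∑ α_j = 1`; let `v_j` be the correspondingly rotated coordinates of `y`. The entire function
`p(y) = exp (∑ (4 v_j - (v_j - α_j)²) - 4)` equals `1` at `x₀`, and since `Re v + (Im v)² / 2 ≤ |v|`
for `|v| ≤ 1`, its modulus on the unit ball is at most `exp (-∑ |v_j - α_j|²) ≤ exp (-‖y - x₀‖² / n)`.
So `x₀` is a strong peak point, with a rate of decay that does not depend on `x₀`. If `f` almost
attains its norm at `x₀`, then for a high power `pᴷ` the function `f + β pᴷ f(x₀)` attains its norm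
(on the sphere, by the maximum modulus principle on the compact ball) only near `x₀`, and its
normalization is `g`; the uniform decay makes `η` independent of `x₀`.
-/

open NormedSpace Metric Filter Topology

noncomputable section

universe u

variable {X Y : Type*} [NormedAddCommGroup X] [NormedSpace ℂ X]
  [NormedAddCommGroup Y] [NormedSpace ℂ Y]

/-- Membership in `A_{w*u}(B_{X*}, Y)`: `f` is weak-*-to-norm continuous on the closed unit
ball of the dual (equivalently, weak-* uniformly continuous, as the ball is weak-* compact)
and holomorphic on the open unit ball. -/
def MemAwsu (f : StrongDual ℂ X → Y) : Prop :=
  ContinuousOn (fun φ : WeakDual ℂ X => f (WeakDual.toStrongDual φ))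
      {φ : WeakDual ℂ X | ‖WeakDual.toStrongDual φ‖ ≤ 1}
    ∧ DifferentiableOn ℂ f (ball (0 : StrongDual ℂ X) 1)

/-- The supremum norm `‖f‖_∞ = sup {‖f x*‖ : x* ∈ B_{X*}}`. -/
def supNorm (f : StrongDual ℂ X → Y) : ℝ :=
  ⨆ x : closedBall (0 : StrongDual ℂ X) 1, ‖f (x : StrongDual ℂ X)‖

/-- `x₀` is a strong peak point for `A_{w*u}(B_{X*})` with respect to the norm. -/
def IsNormStrongPeakPoint (x₀ : StrongDual ℂ X) : Prop :=
  ∃ f : StrongDual ℂ X → ℂ, MemAwsu f ∧ supNorm f = 1 ∧ ‖f x₀‖ = 1 ∧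
    ∀ δ > 0, ∃ c < 1, ∀ y ∈ closedBall (0 : StrongDual ℂ X) 1, δ ≤ ‖y - x₀‖ → ‖f y‖ ≤ c

section SupNorm

variable {E : Type*} [NormedAddCommGroup E]

lemma supNorm_le {f : StrongDual ℂ X → E} {c : ℝ}
    (h : ∀ y ∈ closedBall (0 : StrongDual ℂ X) 1, ‖f y‖ ≤ c) : supNorm f ≤ c :=
  have : Nonempty (closedBall (0 : StrongDual ℂ X) 1) := ⟨⟨0, mem_closedBall_self zero_le_one⟩⟩
  ciSup_le fun y => h y y.2

lemma le_supNorm {f : StrongDual ℂ X → E}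
    (hf : BddAbove ((‖f ·‖) '' closedBall (0 : StrongDual ℂ X) 1)) {y : StrongDual ℂ X}
    (hy : y ∈ closedBall (0 : StrongDual ℂ X) 1) : ‖f y‖ ≤ supNorm f :=
  le_ciSup (f := fun x : closedBall (0 : StrongDual ℂ X) 1 => ‖f x‖)
    (by rwa [Set.image_eq_range] at hf) ⟨y, hy⟩

lemma supNorm_eq_of_isMaxOn {f : StrongDual ℂ X → E} {x : StrongDual ℂ X}
    (hx : x ∈ closedBall (0 : StrongDual ℂ X) 1)
    (hmax : IsMaxOn (‖f ·‖) (closedBall (0 : StrongDual ℂ X) 1) x) : supNorm f = ‖f x‖ :=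
  le_antisymm (supNorm_le fun _ hy => hmax hy)
    (le_supNorm ⟨‖f x‖, by rintro _ ⟨y, hy, rfl⟩; exact hmax hy⟩ hx)

end SupNorm

namespace MemAwsu

variable {f g : StrongDual ℂ X → Y}

lemma of_continuous_of_differentiable {p : StrongDual ℂ X → Y}
    (hc : Continuous fun φ : WeakDual ℂ X => p (WeakDual.toStrongDual φ))
    (hd : Differentiable ℂ p) : MemAwsu p :=
  ⟨hc.continuousOn, hd.differentiableOn⟩

lemma continuousOn_closedBall (hf : MemAwsu f) :
    ContinuousOn f (closedBall (0 : StrongDual ℂ X) 1) :=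
  hf.1.comp Dual.toWeakDual_continuous.continuousOn fun _ hy => mem_closedBall_zero_iff.1 hy

lemma add (hf : MemAwsu f) (hg : MemAwsu g) : MemAwsu fun y => f y + g y :=
  ⟨hf.1.add hg.1, hf.2.add hg.2⟩

lemma const_smul (hf : MemAwsu f) (c : ℂ) : MemAwsu fun y => c • f y :=
  ⟨hf.1.const_smul c, hf.2.const_smul c⟩

lemma smul_const {p : StrongDual ℂ X → ℂ} (hp : MemAwsu p) (v : Y) : MemAwsu fun y => p y • v :=
  ⟨hp.1.smul continuousOn_const, hp.2.smul_const v⟩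

lemma pow {p : StrongDual ℂ X → ℂ} (hp : MemAwsu p) (K : ℕ) : MemAwsu fun y => p y ^ K :=
  ⟨hp.1.pow K, hp.2.pow K⟩

variable [FiniteDimensional ℂ X]

lemma norm_le_supNorm (hf : MemAwsu f) {y : StrongDual ℂ X}
    (hy : y ∈ closedBall (0 : StrongDual ℂ X) 1) : ‖f y‖ ≤ supNorm f :=
  le_supNorm ((isCompact_closedBall _ _).bddAbove_image hf.continuousOn_closedBall.norm) hy

lemma exists_isMaxOn_near (hf : MemAwsu f) {x₀ : StrongDual ℂ X} (hx₀ : ‖x₀‖ = 1) {δ : ℝ}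
    (hfar : ∀ y ∈ closedBall (0 : StrongDual ℂ X) 1, δ ≤ ‖y - x₀‖ → ‖f y‖ < ‖f x₀‖) :
    ∃ x₁ : StrongDual ℂ X, ‖x₁‖ = 1 ∧ ‖x₁ - x₀‖ < δ ∧
      IsMaxOn (‖f ·‖) (closedBall (0 : StrongDual ℂ X) 1) x₁ := by
  have : Nontrivial (StrongDual ℂ X) := nontrivial_of_ne x₀ 0 (by rintro rfl; simp at hx₀)
  have hcl := closure_ball (0 : StrongDual ℂ X) one_ne_zero
  obtain ⟨x₁, hx₁, hmax⟩ := Complex.exists_mem_frontier_isMaxOn_norm isBounded_ball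
    ⟨0, mem_ball_self one_pos⟩ ⟨hf.2, hcl ▸ hf.continuousOn_closedBall⟩
  rw [frontier_ball (0 : StrongDual ℂ X) one_ne_zero, mem_sphere_zero_iff_norm] at hx₁
  rw [hcl] at hmax
  refine ⟨x₁, hx₁, not_le.1 fun hδ => ?_, hmax⟩
  exact (hfar x₁ (mem_closedBall_zero_iff.2 hx₁.le) hδ).not_ge
    (hmax (mem_closedBall_zero_iff.2 hx₀.le))

end MemAwsu

lemma exists_normalized_of_isMaxOn {f g₀ : StrongDual ℂ X → Y}
    {x₁ : StrongDual ℂ X} {β : ℝ} (hg₀ : MemAwsu g₀) (hx₁ : ‖x₁‖ = 1)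
    (hmax : IsMaxOn (‖g₀ ·‖) (closedBall (0 : StrongDual ℂ X) 1) x₁) (hM : 1 ≤ ‖g₀ x₁‖)
    (hf : ∀ y ∈ closedBall (0 : StrongDual ℂ X) 1, ‖f y‖ ≤ 1)
    (hg₀f : ∀ y ∈ closedBall (0 : StrongDual ℂ X) 1, ‖g₀ y - f y‖ ≤ β) :
    ∃ g : StrongDual ℂ X → Y, MemAwsu g ∧ supNorm g = 1 ∧ ‖g x₁‖ = 1 ∧
      supNorm (fun y => g y - f y) ≤ 2 * β := by
  set M := ‖g₀ x₁‖
  have hM0 : 0 < M := one_pos.trans_le hM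
  have hx₁ball : x₁ ∈ closedBall (0 : StrongDual ℂ X) 1 := mem_closedBall_zero_iff.2 hx₁.le
  have hnorm : ∀ y, ‖((M⁻¹ : ℝ) : ℂ) • g₀ y‖ = M⁻¹ * ‖g₀ y‖ := fun y => by
    rw [norm_smul, Complex.norm_real, Real.norm_of_nonneg (inv_nonneg.2 hM0.le)]
  have hgx₁ : ‖((M⁻¹ : ℝ) : ℂ) • g₀ x₁‖ = 1 := by rw [hnorm, inv_mul_cancel₀ hM0.ne']
  refine ⟨fun y => ((M⁻¹ : ℝ) : ℂ) • g₀ y, hg₀.const_smul _, ?_, hgx₁, supNorm_le fun y hy => ?_⟩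
  · refine hgx₁ ▸ supNorm_eq_of_isMaxOn hx₁ball fun y hy => ?_
    show ‖_‖ ≤ ‖_‖
    rw [hnorm, hnorm]
    exact mul_le_mul_of_nonneg_left (hmax hy) (inv_nonneg.2 hM0.le)
  · have hscale : ‖((M⁻¹ : ℝ) : ℂ) • g₀ y - g₀ y‖ ≤ M - 1 := by
      have hM1 : M⁻¹ ≤ 1 := inv_le_one_of_one_le₀ hM
      calc ‖((M⁻¹ : ℝ) : ℂ) • g₀ y - g₀ y‖ = (1 - M⁻¹) * ‖g₀ y‖ := by
            rw [← neg_sub, norm_neg, show g₀ y - ((M⁻¹ : ℝ) : ℂ) • g₀ y =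
                ((1 - M⁻¹ : ℝ) : ℂ) • g₀ y by push_cast; rw [sub_smul, one_smul],
              norm_smul, Complex.norm_real, Real.norm_of_nonneg (by linarith)]
        _ ≤ (1 - M⁻¹) * M := by gcongr; exact hmax hy
        _ = M - 1 := by field_simp
    have hM_le : M ≤ 1 + β := by
      calc M ≤ ‖f x₁‖ + ‖g₀ x₁ - f x₁‖ := norm_le_insert' _ _
        _ ≤ 1 + β := add_le_add (hf x₁ hx₁ball) (hg₀f x₁ hx₁ball)
    calc ‖((M⁻¹ : ℝ) : ℂ) • g₀ y - f y‖
        ≤ ‖((M⁻¹ : ℝ) : ℂ) • g₀ y - g₀ y‖ + ‖g₀ y - f y‖ := norm_sub_le_norm_sub_add_norm_sub _ _ _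
      _ ≤ 2 * β := by linarith [hg₀f y hy]

structure IsUniformPeakFamily (p : StrongDual ℂ X → StrongDual ℂ X → ℂ) : Prop where
  memAwsu : ∀ x₀ : StrongDual ℂ X, ‖x₀‖ = 1 → MemAwsu (p x₀)
  apply_self : ∀ x₀ : StrongDual ℂ X, ‖x₀‖ = 1 → p x₀ x₀ = 1
  norm_le_one : ∀ x₀ : StrongDual ℂ X, ‖x₀‖ = 1 →
    ∀ y ∈ closedBall (0 : StrongDual ℂ X) 1, ‖p x₀ y‖ ≤ 1
  uniform_decay : ∀ δ > 0, ∃ c < 1, ∀ x₀ : StrongDual ℂ X, ‖x₀‖ = 1 →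
    ∀ y ∈ closedBall (0 : StrongDual ℂ X) 1, δ ≤ ‖y - x₀‖ → ‖p x₀ y‖ ≤ c

namespace IsUniformPeakFamily

variable {p : StrongDual ℂ X → StrongDual ℂ X → ℂ}

lemma isNormStrongPeakPoint (hp : IsUniformPeakFamily p) {x₀ : StrongDual ℂ X}
    (hx₀ : ‖x₀‖ = 1) : IsNormStrongPeakPoint x₀ := by
  have hpx₀ : ‖p x₀ x₀‖ = 1 := by rw [hp.apply_self x₀ hx₀, norm_one]
  refine ⟨p x₀, hp.memAwsu x₀ hx₀, ?_, hpx₀, fun δ hδ => ?_⟩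
  · exact hpx₀ ▸ supNorm_eq_of_isMaxOn (mem_closedBall_zero_iff.2 hx₀.le)
      fun y hy => (hp.norm_le_one x₀ hx₀ y hy).trans hpx₀.ge
  · obtain ⟨c, hc, hdecay⟩ := hp.uniform_decay δ hδ
    exact ⟨c, hc, hdecay x₀ hx₀⟩

theorem bishopPhelpsBollobas [FiniteDimensional ℂ X] (hp : IsUniformPeakFamily p) {ε : ℝ}
    (hε : ε ∈ Set.Ioo (0 : ℝ) 1) :
    ∃ η > 0, ∀ f : StrongDual ℂ X → Y, MemAwsu f → supNorm f = 1 →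
      ∀ x₀ : StrongDual ℂ X, ‖x₀‖ = 1 → 1 - η < ‖f x₀‖ →
        ∃ g : StrongDual ℂ X → Y, ∃ x₁ : StrongDual ℂ X,
          MemAwsu g ∧ supNorm g = 1 ∧ ‖x₁‖ = 1 ∧
          ‖g x₁‖ = 1 ∧ supNorm (fun y => g y - f y) < ε ∧ ‖x₁ - x₀‖ < ε := by
  obtain ⟨hε0, hε1⟩ := hε
  obtain ⟨c, hc1, hdecay⟩ := hp.uniform_decay ε hε0
  obtain ⟨K, hK⟩ := exists_pow_lt_of_lt_one one_half_pos hc1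
  refine ⟨ε / 16, by positivity, fun f hf hf1 x₀ hx₀ hfx₀ => ?_⟩
  have hfle : ∀ y ∈ closedBall (0 : StrongDual ℂ X) 1, ‖f y‖ ≤ 1 :=
    fun y hy => hf1 ▸ hf.norm_le_supNorm hy
  have hx₀ball : x₀ ∈ closedBall (0 : StrongDual ℂ X) 1 := mem_closedBall_zero_iff.2 hx₀.le
  set β := ε / 4 with hβ
  have hβ0 : 0 < β := by positivity
  set g₀ : StrongDual ℂ X → Y := fun y => f y + (β : ℂ) • (p x₀ y ^ K • f x₀)
  have hg₀ : MemAwsu g₀ := hf.add ((((hp.memAwsu x₀ hx₀).pow K).smul_const _).const_smul _)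
  have hg₀f : ∀ y, ‖g₀ y - f y‖ ≤ β * ‖p x₀ y‖ ^ K := fun y => by
    rw [add_sub_cancel_left, norm_smul, norm_smul, norm_pow, Complex.norm_real,
      Real.norm_of_nonneg hβ0.le, ← mul_assoc]
    exact mul_le_of_le_one_right (by positivity) (hfle x₀ hx₀ball)
  have hg₀x₀ : 1 + β / 2 < ‖g₀ x₀‖ := by
    have : g₀ x₀ = ((1 + β : ℝ) : ℂ) • f x₀ := by
      simp only [g₀, hp.apply_self x₀ hx₀, one_pow, one_smul, Complex.ofReal_add,
        Complex.ofReal_one, add_smul]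
    rw [this, norm_smul, Complex.norm_real, Real.norm_of_nonneg (by positivity)]
    nlinarith [mul_lt_mul_of_pos_left hfx₀ (by positivity : (0 : ℝ) < 1 + β)]
  have hfar : ∀ y ∈ closedBall (0 : StrongDual ℂ X) 1, ε ≤ ‖y - x₀‖ → ‖g₀ y‖ < ‖g₀ x₀‖ := by
    intro y hy hyx₀
    have hpy : ‖p x₀ y‖ ^ K < 1 / 2 :=
      (pow_le_pow_left₀ (norm_nonneg _) (hdecay x₀ hx₀ y hy hyx₀) K).trans_lt hK
    calc ‖g₀ y‖ ≤ ‖f y‖ + ‖g₀ y - f y‖ := norm_le_insert' _ _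
      _ ≤ 1 + β * ‖p x₀ y‖ ^ K := add_le_add (hfle y hy) (hg₀f y)
      _ < ‖g₀ x₀‖ := by nlinarith
  obtain ⟨x₁, hx₁, hx₁x₀, hmax⟩ := hg₀.exists_isMaxOn_near hx₀ hfar
  have hM : 1 ≤ ‖g₀ x₁‖ := by
    have : ‖g₀ x₀‖ ≤ ‖g₀ x₁‖ := hmax hx₀ball
    linarith
  obtain ⟨g, hg, hg1, hgx₁, hgf⟩ := exists_normalized_of_isMaxOn hg₀ hx₁ hmax hM hfle
    fun y hy => (hg₀f y).trans <| mul_le_of_le_one_right hβ0.le <|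
      pow_le_one₀ (norm_nonneg _) (hp.norm_le_one x₀ hx₀ y hy)
  exact ⟨g, x₁, hg, hg1, hx₁, hgx₁, by linarith, hx₁x₀⟩

end IsUniformPeakFamily

open Complex

def normalizingPhase (z : ℂ) : ℂ := cexp (-(arg z * I))

lemma norm_normalizingPhase (z : ℂ) : ‖normalizingPhase z‖ = 1 := by
  rw [normalizingPhase, ← neg_mul, ← ofReal_neg, norm_exp_ofReal_mul_I]

lemma normalizingPhase_mul_self (z : ℂ) : normalizingPhase z * z = ‖z‖ := by
  conv_lhs => arg 2; rw [← norm_mul_exp_arg_mul_I z]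
  rw [normalizingPhase, mul_left_comm, ← Complex.exp_add, neg_add_cancel, Complex.exp_zero,
    mul_one]

lemma re_four_mul_sub_sq_le {v : ℂ} (hv : ‖v‖ ≤ 1) (α : ℝ) :
    (4 * v - (v - α) ^ 2).re ≤ 4 * ‖v‖ - ‖v - α‖ ^ 2 := by
  have hre : (4 * v - (v - α) ^ 2).re = 4 * v.re - (v.re - α) ^ 2 + v.im ^ 2 := by
    simp only [sub_re, mul_re, sq, sub_im, ofReal_re, ofReal_im]; norm_num; ring
  have hnorm : ‖v - α‖ ^ 2 = (v.re - α) ^ 2 + v.im ^ 2 := by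
    rw [Complex.sq_norm, normSq_apply]; simp only [sub_re, sub_im, ofReal_re, ofReal_im]; ring
  have hv2 : ‖v‖ ^ 2 = v.re ^ 2 + v.im ^ 2 := by rw [Complex.sq_norm, normSq_apply]; ring
  -- `(Im v)² = (‖v‖ - Re v)(‖v‖ + Re v) ≤ 2 (‖v‖ - Re v)`
  nlinarith [re_le_norm v, abs_re_le_norm v, neg_abs_le v.re]

section EllOne

variable {ι : Type*} [DecidableEq ι]

def rotatedCoord (x₀ y : StrongDual ℂ (ι → ℂ)) (j : ι) : ℂ :=
  normalizingPhase (x₀ (Pi.single j 1)) * y (Pi.single j 1)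

variable (x₀ y : StrongDual ℂ (ι → ℂ))

lemma rotatedCoord_self (j : ι) : rotatedCoord x₀ x₀ j = ‖x₀ (Pi.single j 1)‖ :=
  normalizingPhase_mul_self _

lemma norm_rotatedCoord (j : ι) : ‖rotatedCoord x₀ y j‖ = ‖y (Pi.single j 1)‖ := by
  rw [rotatedCoord, norm_mul, norm_normalizingPhase, one_mul]

lemma norm_rotatedCoord_sub (j : ι) :
    ‖rotatedCoord x₀ y j - ‖x₀ (Pi.single j 1)‖‖ = ‖(y - x₀) (Pi.single j 1)‖ := by
  rw [← rotatedCoord_self, rotatedCoord, rotatedCoord, ← mul_sub, norm_mul, norm_normalizingPhase,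
    one_mul]
  rfl

variable [Fintype ι]

lemma StrongDual.apply_pi_eq_sum (y : StrongDual ℂ (ι → ℂ)) (x : ι → ℂ) :
    y x = ∑ j, x j * y (Pi.single j 1) := by
  conv_lhs => rw [← Finset.univ_sum_single x]
  refine (map_sum y _ _).trans (Finset.sum_congr rfl fun j _ => ?_)
  rw [← smul_eq_mul, ← map_smul, ← Pi.single_smul, smul_eq_mul, mul_one]

lemma StrongDual.norm_pi_eq_sum (y : StrongDual ℂ (ι → ℂ)) :
    ‖y‖ = ∑ j, ‖y (Pi.single j 1)‖ := by
  refine le_antisymm (y.opNorm_le_bound (by positivity) fun x => ?_) ?_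
  · calc ‖y x‖ ≤ ∑ j, ‖x j‖ * ‖y (Pi.single j 1)‖ := by
          rw [y.apply_pi_eq_sum]
          exact (norm_sum_le _ _).trans_eq (by simp only [norm_mul])
      _ ≤ ∑ j, ‖x‖ * ‖y (Pi.single j 1)‖ := by gcongr; exact norm_le_pi_norm x _
      _ = (∑ j, ‖y (Pi.single j 1)‖) * ‖x‖ := by rw [← Finset.mul_sum, mul_comm]
  · let w : ι → ℂ := fun j => normalizingPhase (y (Pi.single j 1))
    have hw : ‖w‖ ≤ 1 :=
      pi_norm_le_iff_of_nonneg zero_le_one |>.2 fun j => (norm_normalizingPhase _).le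
    have hyw : y w = ((∑ j, ‖y (Pi.single j 1)‖ : ℝ) : ℂ) := by
      rw [y.apply_pi_eq_sum, ofReal_sum]
      exact Finset.sum_congr rfl fun j _ => normalizingPhase_mul_self _
    calc ∑ j, ‖y (Pi.single j 1)‖ = ‖y w‖ := by
          rw [hyw, norm_real, Real.norm_of_nonneg (by positivity)]
      _ ≤ ‖y‖ * ‖w‖ := y.le_opNorm w
      _ ≤ ‖y‖ := mul_le_of_le_one_right (norm_nonneg y) hw

lemma StrongDual.sq_norm_pi_le (y : StrongDual ℂ (ι → ℂ)) :
    ‖y‖ ^ 2 ≤ Fintype.card ι * ∑ j, ‖y (Pi.single j 1)‖ ^ 2 := by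
  rw [y.norm_pi_eq_sum]
  exact sq_sum_le_card_mul_sum_sq

def ell1PeakExponent (x₀ y : StrongDual ℂ (ι → ℂ)) : ℂ :=
  ∑ j, (4 * rotatedCoord x₀ y j - (rotatedCoord x₀ y j - ‖x₀ (Pi.single j 1)‖) ^ 2) - 4

def ell1Peak (x₀ y : StrongDual ℂ (ι → ℂ)) : ℂ := cexp (ell1PeakExponent x₀ y)

lemma ell1Peak_self (hx₀ : ‖x₀‖ = 1) : ell1Peak x₀ x₀ = 1 := by
  simp [ell1Peak, ell1PeakExponent, rotatedCoord_self, ← Finset.mul_sum, ← ofReal_sum,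
    ← StrongDual.norm_pi_eq_sum, hx₀]

lemma re_ell1PeakExponent_le (hy : ‖y‖ ≤ 1) :
    (ell1PeakExponent x₀ y).re ≤ -∑ j, ‖(y - x₀) (Pi.single j 1)‖ ^ 2 := by
  have hcoord : ∀ j, ‖rotatedCoord x₀ y j‖ ≤ 1 := fun j =>
    (norm_rotatedCoord x₀ y j).trans_le <|
      (Finset.single_le_sum (f := fun i => ‖y (Pi.single i 1)‖) (fun i _ => norm_nonneg _)
        (Finset.mem_univ j)).trans (y.norm_pi_eq_sum.symm.trans_le hy)
  calc (ell1PeakExponent x₀ y).re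
      ≤ ∑ j, (4 * ‖y (Pi.single j 1)‖ - ‖(y - x₀) (Pi.single j 1)‖ ^ 2) - 4 := by
        rw [ell1PeakExponent, sub_re, re_sum]
        gcongr with j
        swap; · norm_num
        rw [← norm_rotatedCoord x₀ y j, ← norm_rotatedCoord_sub x₀ y j]
        exact re_four_mul_sub_sq_le (hcoord j) _
    _ = 4 * (‖y‖ - 1) - ∑ j, ‖(y - x₀) (Pi.single j 1)‖ ^ 2 := by
        rw [Finset.sum_sub_distrib, ← Finset.mul_sum, ← y.norm_pi_eq_sum]; norm_num; ring
    _ ≤ _ := by linarith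

lemma norm_ell1Peak_le (hy : ‖y‖ ≤ 1) :
    ‖ell1Peak x₀ y‖ ≤ Real.exp (-(‖y - x₀‖ ^ 2 / Fintype.card ι)) := by
  rw [ell1Peak, norm_exp]
  refine Real.exp_le_exp.2 ((re_ell1PeakExponent_le x₀ y hy).trans (neg_le_neg ?_))
  exact div_le_of_le_mul₀ (Nat.cast_nonneg _) (by positivity)
    ((y - x₀).sq_norm_pi_le.trans_eq (mul_comm _ _))

lemma norm_ell1Peak_le_one (hy : ‖y‖ ≤ 1) : ‖ell1Peak x₀ y‖ ≤ 1 :=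
  (norm_ell1Peak_le x₀ y hy).trans (Real.exp_le_one_iff.2 (neg_nonpos.2 (by positivity)))

lemma memAwsu_ell1Peak : MemAwsu (ell1Peak x₀) := by
  refine .of_continuous_of_differentiable ?_ ?_
  · have heval : ∀ j, Continuous fun φ : WeakDual ℂ (ι → ℂ) =>
        WeakDual.toStrongDual φ (Pi.single j 1) := fun j => WeakDual.eval_continuous _
    unfold ell1Peak ell1PeakExponent rotatedCoord
    fun_prop
  · unfold ell1Peak ell1PeakExponent rotatedCoord
    fun_prop

end EllOne

lemma isUniformPeakFamily_ell1Peak {ι : Type*} [Fintype ι] [DecidableEq ι] [Nonempty ι] :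
    IsUniformPeakFamily (ell1Peak (ι := ι)) where
  memAwsu x₀ _ := memAwsu_ell1Peak x₀
  apply_self x₀ hx₀ := ell1Peak_self x₀ hx₀
  norm_le_one x₀ _ y hy := norm_ell1Peak_le_one x₀ y (mem_closedBall_zero_iff.1 hy)
  uniform_decay δ hδ := by
    refine ⟨Real.exp (-(δ ^ 2 / Fintype.card ι)), Real.exp_lt_one_iff.2 (by
      have := Fintype.card_pos (α := ι); simp only [Left.neg_neg_iff]; positivity), ?_⟩
    intro x₀ _ y hy hδy
    refine (norm_ell1Peak_le x₀ y (mem_closedBall_zero_iff.1 hy)).trans ?_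
    gcongr

/-- For `X = ℂⁿ` with the supremum norm (so `X* = ℓ₁ⁿ`), every point of `S_{X*}` is a
strong peak point with respect to the norm, and the vector-valued
Bishop-Phelps-Bollobás theorem holds for `A_{w*u}(B_{X*}, Y)` for every complex Banach
space `Y`. -/
theorem bpb_Awsu_ell1n (n : ℕ) (hn : 1 ≤ n) :
    (∀ x₀ : StrongDual ℂ (Fin n → ℂ), ‖x₀‖ = 1 → IsNormStrongPeakPoint x₀) ∧
    (∀ (Y : Type u) [NormedAddCommGroup Y] [NormedSpace ℂ Y] [CompleteSpace Y],
      ∀ ε ∈ Set.Ioo (0 : ℝ) 1, ∃ η > 0,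
        ∀ f : StrongDual ℂ (Fin n → ℂ) → Y, MemAwsu f → supNorm f = 1 →
          ∀ x₀ : StrongDual ℂ (Fin n → ℂ), ‖x₀‖ = 1 → 1 - η < ‖f x₀‖ →
            ∃ g : StrongDual ℂ (Fin n → ℂ) → Y, ∃ x₁ : StrongDual ℂ (Fin n → ℂ),
              MemAwsu g ∧ supNorm g = 1 ∧ ‖x₁‖ = 1 ∧
              ‖g x₁‖ = 1 ∧ supNorm (fun y => g y - f y) < ε ∧ ‖x₁ - x₀‖ < ε) := by
  have : Nonempty (Fin n) := ⟨⟨0, hn⟩⟩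
  have hp := isUniformPeakFamily_ell1Peak (ι := Fin n)
  exact ⟨fun x₀ hx₀ => hp.isNormStrongPeakPoint hx₀,
    fun Y _ _ _ ε hε => hp.bishopPhelpsBollobas hε⟩
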